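/- Every metric m on the edges of G*π that respects the input weights w and fulfills the lower triangle inequality is customized; in particular, for all vertices s and t there exists an up-down st-path in G*π whose length under m equals the shortest st-path distance in G under w. -/

import Mathlib

open SimpleGraph
open scoped ENNReal

variable {V : Type*}

/-- One step of vertex contraction: remove `v` from the current graph and add an edge
between every pair of its current neighbors. -/
def chStep (H : SimpleGraph V) (v : V) : SimpleGraph V where
  Adj a b := a ≠ b ∧ a ≠ v ∧ b ≠ v ∧ (H.Adj a b ∨ (H.Adj v a ∧ H.Adj v b))
  symm := by
    constructor
    rintro a b ⟨h1, h2, h3, h4⟩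
    refine ⟨h1.symm, h3, h2, ?_⟩
    rcases h4 with h | ⟨ha, hb⟩
    · exact Or.inl h.symm
    · exact Or.inr ⟨hb, ha⟩
  loopless := ⟨fun a h => h.1 rfl⟩

/-- All edges ever present while contracting the vertices of the list in order:
the edges of the initial graph together with all added shortcuts. -/
def chList : SimpleGraph V → List V → SimpleGraph V
  | H, [] => H
  | H, v :: l => H ⊔ chList (chStep H v) l

/-- The rank of a vertex with respect to the contraction order `π`. -/
def rk {n : ℕ} (π : Fin n ≃ V) (v : V) : ℕ := (π.symm v : ℕ)

/-- The contraction hierarchy `G*π`: contract `π 0, π 1, …` in this order and collect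
all original edges and all added shortcuts. -/
def chGraph {n : ℕ} (G : SimpleGraph V) (π : Fin n ≃ V) : SimpleGraph V :=
  chList G ((List.finRange n).map ⇑π)

/-- A list of vertices is up-down w.r.t. a rank function: ranks strictly increase
along a prefix and strictly decrease along the remaining suffix, the two parts
meeting at the maximum-rank vertex. -/
def IsUpDown (r : V → ℕ) (l : List V) : Prop :=
  ∃ l₁ x l₂, l = l₁ ++ x :: l₂ ∧
    List.Chain' (fun a b => r a < r b) (l₁ ++ [x]) ∧
    List.Chain' (fun a b => r b < r a) (x :: l₂)

/-- Reachability in the upward directed graph `G^∧π` (edges of `G*π` directed from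
lower to higher rank): the vertex set of the search space `SS v`. -/
def UpReach {n : ℕ} (G : SimpleGraph V) (π : Fin n ≃ V) (v u : V) : Prop :=
  Relation.ReflTransGen (fun a b => (chGraph G π).Adj a b ∧ rk π a < rk π b) v u

/-- Length of a walk: the sum of the weights of its edges. -/
noncomputable def wlen {H : SimpleGraph V} (m : V → V → ℝ≥0∞) {s t : V}
    (p : H.Walk s t) : ℝ≥0∞ :=
  (p.darts.map (fun d => m d.toProd.1 d.toProd.2)).sum

/-- Shortest path distance in a graph `H` under edge weights `m`. -/
noncomputable def gdist (H : SimpleGraph V) (m : V → V → ℝ≥0∞) (s t : V) : ℝ≥0∞ :=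
  ⨅ (p : H.Walk s t), wlen m p

/-- Minimum length of an up-down `s`-`t` path in `G*π`. -/
noncomputable def updist {n : ℕ} (G : SimpleGraph V) (π : Fin n ≃ V)
    (m : V → V → ℝ≥0∞) (s t : V) : ℝ≥0∞ :=
  ⨅ (p : (chGraph G π).Walk s t) (_ : IsUpDown (rk π) p.support), wlen m p

/-- Minimum length of a strictly rank-increasing `u`-`v` path in `G*π`. -/
noncomputable def upOnlyDist {n : ℕ} (G : SimpleGraph V) (π : Fin n ≃ V)
    (m : V → V → ℝ≥0∞) (u v : V) : ℝ≥0∞ :=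
  ⨅ (p : (chGraph G π).Walk u v)
    (_ : List.Chain' (fun a b => rk π a < rk π b) p.support), wlen m p

/-- `S` is a balanced separator of the subgraph of `G` induced by `U`. -/
def IsBalancedSepOn [DecidableEq V] (G : SimpleGraph V) (U S : Finset V) : Prop :=
  S ⊆ U ∧ ∃ A B : Finset V, A ⊆ U ∧ B ⊆ U ∧
    Disjoint A B ∧ Disjoint A S ∧ Disjoint B S ∧ A ∪ B ∪ S = U ∧
    (∀ a ∈ A, ∀ b ∈ B, ¬ G.Adj a b) ∧
    3 * A.card ≤ 2 * U.card ∧ 3 * B.card ≤ 2 * U.card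

/-- Nested dissection orders (as lists, earliest contracted first, separator last)
of induced subgraphs of `G`, in which the separator chosen at every recursion step on
a `k`-vertex subgraph is balanced and has cardinality at most `c * k ^ α`. -/
inductive IsNDOrder [DecidableEq V] (G : SimpleGraph V) (c α : ℝ) : Finset V → List V → Prop
  | empty : IsNDOrder G c α ∅ []
  | step {U S A B : Finset V} {lA lB lS : List V} :
      Disjoint A B → Disjoint A S → Disjoint B S → A ∪ B ∪ S = U →
      (∀ a ∈ A, ∀ b ∈ B, ¬ G.Adj a b) →
      3 * A.card ≤ 2 * U.card → 3 * B.card ≤ 2 * U.card →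
      ((S.card : ℝ) ≤ c * (U.card : ℝ) ^ α) →
      lS.Nodup → lS.toFinset = S →
      IsNDOrder G c α A lA → IsNDOrder G c α B lB →
      IsNDOrder G c α U (lA ++ lB ++ lS)

/-- Number of vertices of the search space `SS v` in `G^∧π`. -/
noncomputable def nVertsSS {n : ℕ} (G : SimpleGraph V) (π : Fin n ≃ V) (v : V) : ℕ :=
  {u | UpReach G π v u}.ncard

/-- Number of arcs of the search space `SS v` in `G^∧π`: arcs of `G^∧π` with both
endpoints reachable from `v`. -/
noncomputable def nArcsSS {n : ℕ} (G : SimpleGraph V) (π : Fin n ≃ V) (v : V) : ℕ :=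
  {q : V × V | (chGraph G π).Adj q.1 q.2 ∧ rk π q.1 < rk π q.2 ∧
    UpReach G π v q.1 ∧ UpReach G π v q.2}.ncard

/-- The rank sequence of a walk: for each edge, the minimum of the ranks of its
endpoints, sorted in decreasing order. -/
def rankSeq {H : SimpleGraph V} (r : V → ℕ) {s t : V} (p : H.Walk s t) : List ℕ :=
  (p.darts.map (fun d => min (r d.toProd.1) (r d.toProd.2))).insertionSort (· ≥ ·)

/-- Directed length of a walk in `G*π` under a pair of directed metrics `(mu, md)`:
each edge traversed from lower rank to higher rank costs its upward weight,
each edge traversed from higher rank to lower rank costs its downward weight. -/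
noncomputable def dlen {H : SimpleGraph V} (r : V → ℕ) (mu md : V → V → ℝ≥0∞)
    {s t : V} (p : H.Walk s t) : ℝ≥0∞ :=
  (p.darts.map (fun d =>
    if r d.toProd.1 < r d.toProd.2 then mu d.toProd.1 d.toProd.2
    else md d.toProd.2 d.toProd.1)).sum

/-- Length of a directed walk `s :: l` under arc weights `wD`. -/
noncomputable def dWalkLen (wD : V → V → ℝ≥0∞) : V → List V → ℝ≥0∞
  | _, [] => 0
  | s, x :: l => wD s x + dWalkLen wD x l

/-- Shortest directed path distance in the directed graph `D` under arc weights `wD`. -/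
noncomputable def ddist (D : V → V → Prop) (wD : V → V → ℝ≥0∞) (s t : V) : ℝ≥0∞ :=
  ⨅ (l : List V) (_ : List.Chain D s l ∧ l.getLastD s = t), dWalkLen wD s l

/-! Every path in `G*π` can be made up-down without getting longer. Suppose a path has a valley
`x z y`, i.e. `z` is ranked below both of its neighbours on the path. When `z` was contracted, `x`
and `y` were still present, so they are adjacent in `G*π`, and by the lower triangle inequality
the edge `x y` is no longer than the detour `x z y` (if `x = y` the detour is simply dropped).
Each such step shortens the vertex list, and a list with no valley is up-down. Applied to a
shortest path of `G*π`, which exists since the graph is finite and connected, this gives an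
up-down path whose length is the distance in `G*π`, i.e. the distance in `G` as `m` respects `w`.
-/

lemma le_chList : ∀ (l : List V) (H : SimpleGraph V), H ≤ chList H l
  | [], _ => le_rfl
  | _ :: _, _ => le_sup_left

lemma chList_not_adj_of_forall_not_adj {H : SimpleGraph V} {v : V} (hv : ∀ a, ¬ H.Adj v a)
    (l : List V) (a : V) :
    ¬ (chList H l).Adj v a := by
  induction l generalizing H with
  | nil => exact hv a
  | cons u l ih =>
    rintro (h | h)
    · exact hv a h
    · refine ih (fun b hb => ?_) h
      obtain ⟨-, -, -, h' | ⟨hu, -⟩⟩ := hb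
      exacts [hv b h', hv u hu.symm]

lemma chList_adj_of_lower_neighbors {H : SimpleGraph V} {z x y : V} {l₁ l₂ : List V}
    (hnd : (l₁ ++ z :: l₂).Nodup) (hxy : x ≠ y) (hx : x ∈ l₂) (hy : y ∈ l₂)
    (hzx : (chList H (l₁ ++ z :: l₂)).Adj z x) (hzy : (chList H (l₁ ++ z :: l₂)).Adj z y) :
    (chList H (l₁ ++ z :: l₂)).Adj x y := by
  induction l₁ generalizing H with
  | nil =>
    have hz : z ∉ l₂ := (List.nodup_cons.mp hnd).1
    have hiso : ∀ a, ¬ (chList (chStep H z) l₂).Adj z a :=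
      chList_not_adj_of_forall_not_adj (H := chStep H z) (fun a ha => ha.2.1 rfl) l₂
    have hzx' : H.Adj z x := hzx.resolve_right (hiso x)
    have hzy' : H.Adj z y := hzy.resolve_right (hiso y)
    exact Or.inr (le_chList l₂ _
      ⟨hxy, fun h => hz (h ▸ hx), fun h => hz (h ▸ hy), Or.inr ⟨hzx', hzy'⟩⟩)
  | cons v l₁ ih =>
    obtain ⟨hv, hnd'⟩ := List.nodup_cons.mp hnd
    have hne : ∀ a ∈ z :: l₂, a ≠ v := fun a ha h => hv (h ▸ List.mem_append_right _ ha)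
    have lift : ∀ {a}, a ∈ z :: l₂ → (chList H (v :: l₁ ++ z :: l₂)).Adj z a →
        (chList (chStep H v) (l₁ ++ z :: l₂)).Adj z a := by
      rintro a ha (h | h)
      · exact le_chList _ _ ⟨h.ne, hne z List.mem_cons_self, hne a ha, Or.inl h⟩
      · exact h
    exact Or.inr (ih hnd' (lift (List.mem_cons_of_mem _ hx) hzx)
      (lift (List.mem_cons_of_mem _ hy) hzy))

lemma le_chGraph {n : ℕ} (G : SimpleGraph V) (π : Fin n ≃ V) : G ≤ chGraph G π :=
  le_chList _ _

lemma rk_injective {n : ℕ} (π : Fin n ≃ V) : Function.Injective (rk π) :=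
  fun _ _ h => π.symm.injective (Fin.ext h)

lemma getElem_map_finRange_rk {n : ℕ} (π : Fin n ≃ V) (v : V)
    (h : rk π v < ((List.finRange n).map π).length) :
    ((List.finRange n).map π)[rk π v] = v := by
  simp [rk]

lemma mem_drop_map_finRange_of_rk_lt {n : ℕ} (π : Fin n ≃ V) {z v : V}
    (h : rk π z < rk π v) : v ∈ ((List.finRange n).map π).drop (rk π z + 1) := by
  have hv : rk π v < n := (π.symm v).isLt
  refine List.mem_drop_iff_getElem.mpr ⟨rk π v - (rk π z + 1), by simp; omega, ?_⟩
  simp only [Nat.add_sub_cancel' (show rk π z + 1 ≤ rk π v by omega)]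
  exact getElem_map_finRange_rk π v _

lemma map_finRange_eq_append_cons {n : ℕ} (π : Fin n ≃ V) (z : V) :
    (List.finRange n).map π = ((List.finRange n).map π).take (rk π z) ++
      z :: ((List.finRange n).map π).drop (rk π z + 1) := by
  have hz : rk π z < ((List.finRange n).map π).length := by
    rw [List.length_map, List.length_finRange]; exact (π.symm z).isLt
  conv_lhs => rw [← List.take_append_drop (rk π z) ((List.finRange n).map π)]
  rw [List.drop_eq_getElem_cons hz, getElem_map_finRange_rk π z hz]

lemma chGraph_adj_of_lower_neighbors {n : ℕ} {G : SimpleGraph V} {π : Fin n ≃ V} {x y z : V}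
    (hxy : x ≠ y) (hzx : (chGraph G π).Adj z x) (hzy : (chGraph G π).Adj z y)
    (hx : rk π z < rk π x) (hy : rk π z < rk π y) : (chGraph G π).Adj x y := by
  have hnd : ((List.finRange n).map π).Nodup := (List.nodup_finRange n).map π.injective
  unfold chGraph at *
  rw [map_finRange_eq_append_cons π z] at hzx hzy hnd ⊢
  exact chList_adj_of_lower_neighbors hnd hxy (mem_drop_map_finRange_of_rk_lt π hx)
    (mem_drop_map_finRange_of_rk_lt π hy) hzx hzy

noncomputable def listWlen (m : V → V → ℝ≥0∞) : List V → ℝ≥0∞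
  | [] => 0
  | [_] => 0
  | a :: b :: l => m a b + listWlen m (b :: l)

@[simp] lemma listWlen_singleton (m : V → V → ℝ≥0∞) (a : V) : listWlen m [a] = 0 := rfl

@[simp] lemma listWlen_cons_cons (m : V → V → ℝ≥0∞) (a b : V) (l : List V) :
    listWlen m (a :: b :: l) = m a b + listWlen m (b :: l) := rfl

lemma listWlen_append_cons_le (m : V → V → ℝ≥0∞) (A : List V) (x : V) {C D : List V}
    (h : listWlen m (x :: C) ≤ listWlen m (x :: D)) :
    listWlen m (A ++ x :: C) ≤ listWlen m (A ++ x :: D) := by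
  induction A with
  | nil => simpa using h
  | cons a A ih =>
    cases A with
    | nil => simpa using add_le_add_right h (m a x)
    | cons b A => simpa using add_le_add_right ih (m a b)

lemma wlen_cons {H : SimpleGraph V} (m : V → V → ℝ≥0∞) {u v t : V}
    (h : H.Adj u v) (p : H.Walk v t) : wlen m (.cons h p) = m u v + wlen m p := by
  simp [wlen]

lemma wlen_append {H : SimpleGraph V} (m : V → V → ℝ≥0∞) {u v t : V}
    (p : H.Walk u v) (q : H.Walk v t) : wlen m (p.append q) = wlen m p + wlen m q := by
  simp [wlen]

lemma wlen_eq_listWlen {H : SimpleGraph V} (m : V → V → ℝ≥0∞) {s t : V} (p : H.Walk s t) :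
    wlen m p = listWlen m p.support := by
  induction p with
  | nil => simp [wlen]
  | cons h p ih =>
    rw [wlen_cons, ih, Walk.support_cons, ← p.cons_tail_support, listWlen_cons_cons]

lemma wlen_bypass_le [DecidableEq V] {H : SimpleGraph V} (m : V → V → ℝ≥0∞) {s t : V}
    (p : H.Walk s t) : wlen m p.bypass ≤ wlen m p := by
  induction p with
  | nil => exact le_rfl
  | cons h p ih =>
    rw [Walk.bypass, wlen_cons]
    split_ifs with hs
    · calc wlen m (p.bypass.dropUntil _ hs)
          ≤ wlen m (p.bypass.takeUntil _ hs) + wlen m (p.bypass.dropUntil _ hs) := le_add_self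
        _ = wlen m p.bypass := by rw [← wlen_append, Walk.take_spec]
        _ ≤ _ := ih.trans le_add_self
    · rw [wlen_cons]
      exact add_le_add_right ih _

lemma exists_wlen_eq_gdist [Fintype V] [DecidableEq V] {H : SimpleGraph V} [H.LocallyFinite]
    (m : V → V → ℝ≥0∞) {s t : V} (h : H.Reachable s t) :
    ∃ p : H.Walk s t, wlen m p = gdist H m s t := by
  obtain ⟨p₀⟩ := h
  have : Nonempty {p : H.Walk s t // p.length < Fintype.card V} :=
    ⟨⟨p₀.bypass, p₀.bypass_isPath.length_lt⟩⟩
  obtain ⟨q, hq⟩ := Finite.exists_min fun p : {p : H.Walk s t // p.length < Fintype.card V} =>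
    wlen m p.val
  refine ⟨q.val, le_antisymm (le_iInf fun p => ?_) (iInf_le _ _)⟩
  exact (hq ⟨p.bypass, p.bypass_isPath.length_lt⟩).trans (wlen_bypass_le m p)

lemma IsUpDown.cons_of_lt {r : V → ℕ} {a b : V} {l : List V} (h : IsUpDown r (b :: l))
    (hab : r a < r b) : IsUpDown r (a :: b :: l) := by
  obtain ⟨l₁, x, l₂, hl, hinc, hdec⟩ := h
  have hhead : (l₁ ++ [x]).head? = some b := by simpa using (congrArg List.head? hl).symm
  exact ⟨a :: l₁, x, l₂, by rw [hl, List.cons_append], hinc.cons (by simpa [hhead]), hdec⟩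

lemma IsUpDown.cons_of_gt {r : V → ℕ} {a b : V} {l : List V} (h : IsUpDown r (b :: l))
    (hab : r b < r a) : IsUpDown r (a :: b :: l) ∨ ∃ c l', l = c :: l' ∧ r b < r c := by
  obtain ⟨_ | ⟨b', l₁⟩, x, l₂, hl, hinc, hdec⟩ := h
  · obtain ⟨rfl, rfl⟩ := List.cons_eq_cons.mp hl
    exact Or.inl ⟨[], a, b :: l, rfl, .singleton a, .cons_cons hab hdec⟩
  · obtain ⟨rfl, rfl⟩ := List.cons_eq_cons.mp hl
    obtain ⟨c, l', hcl⟩ := List.exists_cons_of_ne_nil (show l₁ ++ x :: l₂ ≠ [] by simp)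
    have hhead : (l₁ ++ [x]).head? = some c := by simpa using congrArg List.head? hcl
    exact Or.inr ⟨c, l', hcl, hinc.rel_head? (by simp [hhead])⟩

lemma isUpDown_or_exists_valley (r : V → ℕ) {l : List V} (hne : l ≠ [])
    (hl : l.IsChain fun a b => r a ≠ r b) :
    IsUpDown r l ∨ ∃ A x z y B, l = A ++ x :: z :: y :: B ∧ r z < r x ∧ r z < r y := by
  induction l with
  | nil => contradiction
  | cons a l ih =>
    rcases l with _ | ⟨b, l⟩
    · exact Or.inl ⟨[], a, [], rfl, .singleton a, .singleton a⟩
    obtain ⟨hab, hl⟩ := List.isChain_cons_cons.mp hl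
    rcases ih (List.cons_ne_nil _ _) hl with hud | ⟨A, x, z, y, B, hbl, hzx, hzy⟩
    · rcases hab.lt_or_gt with hlt | hgt
      · exact Or.inl (hud.cons_of_lt hlt)
      · rcases hud.cons_of_gt hgt with hud' | ⟨c, l', rfl, hbc⟩
        · exact Or.inl hud'
        · exact Or.inr ⟨[], a, b, c, l', rfl, hgt, hbc⟩
    · exact Or.inr ⟨a :: A, x, z, y, B, by rw [hbl, List.cons_append], hzx, hzy⟩

section Customization

variable {n : ℕ} {G : SimpleGraph V} {π : Fin n ≃ V} {m : V → V → ℝ≥0∞}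

def LowerTriangleIneq (G : SimpleGraph V) (π : Fin n ≃ V) (m : V → V → ℝ≥0∞) : Prop :=
  ∀ x y z, (chGraph G π).Adj x y → (chGraph G π).Adj x z → (chGraph G π).Adj z y →
    rk π z < rk π x → rk π z < rk π y → m x y ≤ m x z + m z y

lemma exists_shortcut_of_valley (hlti : LowerTriangleIneq G π m) {x z y : V} {B : List V}
    (hl : (x :: z :: y :: B).IsChain (chGraph G π).Adj)
    (hzx : rk π z < rk π x) (hzy : rk π z < rk π y) :
    ∃ C : List V, C.length < B.length + 2 ∧ (x :: C).IsChain (chGraph G π).Adj ∧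
      (x :: C).getLast? = (x :: z :: y :: B).getLast? ∧
      listWlen m (x :: C) ≤ listWlen m (x :: z :: y :: B) := by
  obtain ⟨hxz, hzy', hyB⟩ : (chGraph G π).Adj x z ∧ (chGraph G π).Adj z y ∧
      (y :: B).IsChain (chGraph G π).Adj := by simpa using hl
  by_cases hxy : x = y
  · subst hxy
    refine ⟨B, by omega, hyB, by simp, ?_⟩
    simpa using le_add_self.trans le_add_self
  · have hxy' := chGraph_adj_of_lower_neighbors hxy hxz.symm hzy' hzx hzy
    refine ⟨y :: B, by simp, .cons_cons hxy' hyB, by simp, ?_⟩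
    simpa [add_assoc] using add_le_add_left (hlti x y z hxy' hxz hzy' hzx hzy) _

theorem exists_isUpDown_of_isChain (hlti : LowerTriangleIneq G π m) (l : List V) (hne : l ≠ [])
    (hl : l.IsChain (chGraph G π).Adj) :
    ∃ l', l'.IsChain (chGraph G π).Adj ∧ l'.head? = l.head? ∧ l'.getLast? = l.getLast? ∧
      listWlen m l' ≤ listWlen m l ∧ IsUpDown (rk π) l' := by
  rcases isUpDown_or_exists_valley (rk π) hne
      (hl.imp fun _ _ h => (rk_injective π).ne h.ne) with hud | ⟨A, x, z, y, B, rfl, hzx, hzy⟩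
  · exact ⟨l, hl, rfl, rfl, le_rfl, hud⟩
  obtain ⟨hA, hxzyB, hlink⟩ := List.isChain_append.mp hl
  obtain ⟨C, hlen, hC, hlast, hcost⟩ := exists_shortcut_of_valley hlti hxzyB hzx hzy
  obtain ⟨l', hl', hhead, hlast', hcost', hud⟩ :=
    exists_isUpDown_of_isChain hlti (A ++ x :: C) (by simp) (hA.append hC hlink)
  refine ⟨l', hl', by simp [hhead], ?_, hcost'.trans (listWlen_append_cons_le m A x hcost), hud⟩
  rw [hlast', List.getLast?_append_cons, List.getLast?_append_cons, hlast]
termination_by l.length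
decreasing_by subst_vars; simp; omega

theorem exists_isUpDown_wlen_le (hlti : LowerTriangleIneq G π m) {s t : V}
    (p : (chGraph G π).Walk s t) :
    ∃ q : (chGraph G π).Walk s t, IsUpDown (rk π) q.support ∧ wlen m q ≤ wlen m p := by
  obtain ⟨l, hl, hhead, hlast, hcost, hud⟩ :=
    exists_isUpDown_of_isChain hlti p.support (by simp) p.isChain_adj_support
  have hne : l ≠ [] := by rintro rfl; simp [List.head?_eq_some_head p.support_ne_nil] at hhead
  have hs : l.head hne = s := by
    simpa [List.head?_eq_some_head hne, List.head?_eq_some_head p.support_ne_nil] using hhead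
  have ht : l.getLast hne = t := by
    simpa [List.getLast?_eq_some_getLast hne, List.getLast?_eq_some_getLast p.support_ne_nil]
      using hlast
  refine ⟨(Walk.ofSupport l hne hl).copy hs ht, by simpa using hud, ?_⟩
  simpa [wlen_eq_listWlen] using hcost

theorem updist_eq_gdist (hlti : LowerTriangleIneq G π m) (s t : V) :
    updist G π m s t = gdist (chGraph G π) m s t := by
  refine le_antisymm (le_iInf fun p => ?_) (iInf_mono fun p => le_iInf fun _ => le_rfl)
  obtain ⟨q, hud, hq⟩ := exists_isUpDown_wlen_le hlti p
  exact (iInf₂_le q hud).trans hq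

end Customization

theorem stmt7_general {V : Type*} {n : ℕ} (G : SimpleGraph V) (hG : G.Connected)
    (π : Fin n ≃ V) (w m : V → V → ℝ≥0∞)
    (hresp : ∀ s t, gdist (chGraph G π) m s t = gdist G w s t)
    (hlti : ∀ x y z, (chGraph G π).Adj x y → (chGraph G π).Adj x z →
      (chGraph G π).Adj z y → rk π z < rk π x → rk π z < rk π y →
      m x y ≤ m x z + m z y) :
    (∀ s t, updist G π m s t = gdist (chGraph G π) m s t) ∧
    (∀ s t, ∃ p : (chGraph G π).Walk s t,
      IsUpDown (rk π) p.support ∧ wlen m p = gdist G w s t) := by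
  classical
  have : Fintype V := Fintype.ofEquiv (Fin n) π
  refine ⟨updist_eq_gdist hlti, fun s t => ?_⟩
  obtain ⟨p, hp⟩ := exists_wlen_eq_gdist m ((hG.preconnected s t).mono (le_chGraph G π))
  obtain ⟨q, hud, hq⟩ := exists_isUpDown_wlen_le hlti p
  exact ⟨q, hud, (le_antisymm (hq.trans hp.le) (iInf_le _ q)).trans (hresp s t)⟩

/-- Every metric `m` on the edges of `G*π` that respects the input
weights `w` and fulfills the lower triangle inequality is customized; in particular,
for all vertices `s` and `t` there exists an up-down `s`-`t` path in `G*π` whose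
length under `m` equals the shortest `s`-`t` path distance in `G` under `w`. -/
theorem stmt7 {V : Type*} {n : ℕ} (G : SimpleGraph V) (hG : G.Connected)
    (π : Fin n ≃ V) (w m : V → V → ℝ≥0∞)
    (hw_symm : ∀ a b, w a b = w b a)
    (hw_pos : ∀ a b, G.Adj a b → 0 < w a b ∧ w a b < ⊤)
    (hm_symm : ∀ a b, m a b = m b a)
    (hm_pos : ∀ a b, (chGraph G π).Adj a b → 0 < m a b)
    (hresp : ∀ s t, gdist (chGraph G π) m s t = gdist G w s t)
    (hlti : ∀ x y z, (chGraph G π).Adj x y → (chGraph G π).Adj x z →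
      (chGraph G π).Adj z y → rk π z < rk π x → rk π z < rk π y →
      m x y ≤ m x z + m z y) :
    (∀ s t, updist G π m s t = gdist (chGraph G π) m s t) ∧
    (∀ s t, ∃ p : (chGraph G π).Walk s t,
      IsUpDown (rk π) p.support ∧ wlen m p = gdist G w s t) :=
  stmt7_general G hG π w m hresp hlti
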